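/- Let G be a finite group and R a commutative ring. The category of sheaves of R-modules on the orbit category O(G) equipped with the atomic topology is equivalent to the category of right RG-modules. -/

import Mathlib

open CategoryTheory

/-! ## Basic site-theoretic notions -/

/-- The Ore condition: any cospan can be completed to a commutative square. -/
def OreCondition (C : Type*) [Category C] : Prop :=
  ∀ ⦃x y z : C⦄ (f : y ⟶ x) (g : z ⟶ x),
    ∃ (w : C) (p : w ⟶ y) (q : w ⟶ z), p ≫ f = q ≫ g

/-- A Grothendieck topology is the atomic topology iff its covering sieves are
exactly the nonempty sieves. -/
def IsAtomicTopology {C : Type*} [Category C] (J : GrothendieckTopology C) : Prop :=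
  ∀ (x : C) (S : Sieve x), S ∈ J x ↔ ∃ (y : C) (f : y ⟶ x), S f

/-- The presieve on `c` consisting of all morphisms with domain `c₀`. -/
def domPresieve {C : Type*} [Category C] (c₀ : C) (c : C) : Presieve c :=
  fun Y => {_f | Y = c₀}

/-! ## Right `G`-sets and the orbit category -/

/-- The category of right `G`-sets, realized as presheaves of sets on the
one-object category of `G`. -/
abbrev GSet (G : Type) [Group G] := (SingleObj G)ᵒᵖ ⥤ Type

variable {G : Type} [Group G]

/-- The right coset space `H\G` as a right `G`-set (`G` acting by right
multiplication). -/
def cosetGSet (H : Subgroup G) : GSet G where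
  obj _ := Quotient (QuotientGroup.rightRel H)
  map f := TypeCat.ofHom (Quotient.map' (fun x => x * f.unop)
    (fun a b hab => by
      rw [QuotientGroup.rightRel_apply] at hab ⊢
      convert hab using 1
      group))
  map_id _ := by
    ext q
    induction q using Quotient.inductionOn' with
    | h a => exact congrArg (Quotient.mk _) (mul_one a)
  map_comp f g := by
    ext q
    induction q using Quotient.inductionOn' with
    | h a => exact congrArg (Quotient.mk _) (mul_assoc a f.unop g.unop).symm

/-- The orbit category `O(G)`: the full subcategory of right `G`-sets on the
coset spaces `H\G`, indexed by the subgroups of `G`. -/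
abbrev OrbitCat (G : Type) [Group G] := InducedCategory (GSet G) (cosetGSet (G := G))

/-- For `a ∈ G`, the `G`-map `c_a : 1\G → 1\G`, `k ↦ a * k`. -/
def botAuto (a : G) : cosetGSet (⊥ : Subgroup G) ⟶ cosetGSet (⊥ : Subgroup G) where
  app _ := TypeCat.ofHom (Quotient.map' (fun k => a * k)
    (fun x y hxy => by
      rw [QuotientGroup.rightRel_apply] at hxy ⊢
      rw [Subgroup.mem_bot] at hxy ⊢
      rw [mul_inv_rev, ← mul_assoc, mul_assoc a, hxy]
      simp))
  naturality X Y f := by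
    ext q
    induction q using Quotient.inductionOn' with
    | h k => exact congrArg (Quotient.mk _) (mul_assoc a k f.unop).symm

/-- The functor from the one-object category of `G` to the orbit category with
value `1\G`, sending `a` to `c_a`; it makes `F(1\G)` a right `G`-set for any
presheaf `F` on the orbit category. -/
def orbitBotIota (G : Type) [Group G] : SingleObj G ⥤ OrbitCat G where
  obj _ := (⊥ : Subgroup G)
  map a := InducedCategory.homMk (botAuto a)
  map_id _ := by
    apply InducedCategory.hom_ext
    apply NatTrans.ext
    funext X
    ext q
    induction q using Quotient.inductionOn' with
    | h k => exact congrArg (Quotient.mk _) (one_mul k)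
  map_comp {x y z} a b := by
    apply InducedCategory.hom_ext
    apply NatTrans.ext
    funext X
    ext q
    induction q using Quotient.inductionOn' with
    | h k => exact congrArg (Quotient.mk _) (mul_assoc b a k)

/-! ## The transporter category of a `G`-poset -/

/-- The transporter category `P ⋊ G` of a `G`-poset `P`: objects are those of
`P`, and morphisms `x ⟶ y` are elements `g ∈ G` with `g • x ≤ y`. -/
@[ext] structure Transporter (G : Type) (P : Type) where pt : P

instance Transporter.category (G P : Type) [Group G] [PartialOrder P] [MulAction G P]
    [CovariantClass G P (· • ·) (· ≤ ·)] : Category (Transporter G P) where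
  Hom x y := { g : G // g • x.pt ≤ y.pt }
  id x := ⟨1, by simp⟩
  comp {x y z} f g := ⟨g.1 * f.1, by
    rw [mul_smul]
    exact le_trans (CovariantClass.elim g.1 f.2) g.2⟩
  id_comp f := Subtype.ext (mul_one _)
  comp_id f := Subtype.ext (one_mul _)
  assoc f g h := Subtype.ext (mul_assoc h.1 g.1 f.1).symm

variable {P : Type} [PartialOrder P] [MulAction G P]
    [CovariantClass G P (· • ·) (· ≤ ·)]

theorem smul_le_smul_act (g : G) {a b : P} (h : a ≤ b) : g • a ≤ g • b :=
  CovariantClass.elim g h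

/-- An initial (i.e. bottom) element of a `G`-poset is fixed by `G`. -/
theorem smul_bot_eq {x₀ : P} (hbot : ∀ x : P, x₀ ≤ x) (g : G) : g • x₀ = x₀ :=
  le_antisymm (by simpa using smul_le_smul_act g (hbot (g⁻¹ • x₀))) (hbot _)

/-- The endomorphism `(g, id)` of the initial object `x₀` of `P ⋊ G`. -/
def gmor {x₀ : P} (hbot : ∀ x : P, x₀ ≤ x) (g : G) :
    (⟨x₀⟩ : Transporter G P) ⟶ (⟨x₀⟩ : Transporter G P) :=
  ⟨g, le_of_eq (smul_bot_eq hbot g)⟩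

theorem gmor_comp {x₀ : P} (hbot : ∀ x : P, x₀ ≤ x) (a b : G) :
    gmor (G := G) hbot b ≫ gmor hbot a = gmor hbot (a * b) := rfl

theorem gmor_one {x₀ : P} (hbot : ∀ x : P, x₀ ≤ x) :
    gmor (G := G) hbot (1 : G) = 𝟙 (⟨x₀⟩ : Transporter G P) := rfl

/-- The projection functor `π : P ⋊ G ⥤ G`. -/
def piFunctor (G P : Type) [Group G] [PartialOrder P] [MulAction G P]
    [CovariantClass G P (· • ·) (· ≤ ·)] : Transporter G P ⥤ SingleObj G where
  obj _ := SingleObj.star G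
  map f := f.1
  map_id _ := rfl
  map_comp _ _ := rfl

/-! ## Quotients of transporter categories and fixed-point presheaves -/

variable {C : Type} [SmallCategory C]

section
variable (ρ : Transporter G P ⥤ C) {x₀ : P} (hbot : ∀ x : P, x₀ ≤ x)

/-- `Hom_C(x₀, c)` as a right `G`-set, with `f · g := ρ(g, id) ≫ f`. -/
def homGSet (c : C) : GSet G where
  obj _ := (ρ.obj ⟨x₀⟩ ⟶ c)
  map f := TypeCat.ofHom (fun φ => ρ.map (gmor hbot f.unop) ≫ φ)
  map_id _ := by
    ext φ
    show ρ.map (gmor hbot (1 : G)) ≫ φ = φ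
    rw [gmor_one, ρ.map_id, Category.id_comp]
  map_comp {X Y Z} f g := by
    ext φ
    show ρ.map (gmor hbot (f.unop * g.unop)) ≫ φ =
      ρ.map (gmor hbot g.unop) ≫ ρ.map (gmor hbot f.unop) ≫ φ
    rw [← gmor_comp, ρ.map_comp, Category.assoc]

/-- Postcomposition `Hom_C(x₀, c) → Hom_C(x₀, c')` with `φ : c ⟶ c'`, as a map
of right `G`-sets. -/
def homGSetMap {c c' : C} (φ : c ⟶ c') : homGSet ρ hbot c ⟶ homGSet ρ hbot c' where
  app _ := TypeCat.ofHom (fun f => (show ρ.obj ⟨x₀⟩ ⟶ c from f) ≫ φ)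
  naturality X Y f := by
    ext ψ
    show (ρ.map (gmor hbot f.unop) ≫ (show ρ.obj ⟨x₀⟩ ⟶ c from ψ)) ≫ φ =
      ρ.map (gmor hbot f.unop) ≫ ((show ρ.obj ⟨x₀⟩ ⟶ c from ψ) ≫ φ)
    exact Category.assoc _ _ _

theorem homGSetMap_id (c : C) : homGSetMap ρ hbot (𝟙 c) = 𝟙 (homGSet ρ hbot c) := by
  apply NatTrans.ext
  funext X
  ext f
  exact Category.comp_id f

theorem homGSetMap_comp {c c' c'' : C} (φ : c ⟶ c') (ψ : c' ⟶ c'') :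
    homGSetMap ρ hbot (φ ≫ ψ) = homGSetMap ρ hbot φ ≫ homGSetMap ρ hbot ψ := by
  apply NatTrans.ext
  funext X
  ext f
  exact (Category.assoc _ _ _).symm

/-- The fixed-point presheaf `F_M : x ↦ Hom_{G-Set}(Hom_C(x₀, x), M)` on `C`. -/
def fixedPointPresheaf (M : GSet G) : Cᵒᵖ ⥤ Type where
  obj c := homGSet ρ hbot c.unop ⟶ M
  map {c c'} ψ := TypeCat.ofHom (fun η => homGSetMap ρ hbot ψ.unop ≫ η)
  map_id c := by
    apply TypeCat.homEquiv.injective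
    funext η
    show homGSetMap ρ hbot (𝟙 c.unop) ≫ η = η
    rw [homGSetMap_id, Category.id_comp]
  map_comp {c c' c''} ψ ψ' := by
    apply TypeCat.homEquiv.injective
    funext η
    show homGSetMap ρ hbot (ψ'.unop ≫ ψ.unop) ≫ η = _
    rw [homGSetMap_comp, Category.assoc]
    rfl

/-- The right `G`-set `𝔊(x₀)` attached to a presheaf `𝔊` on `C`: `g ∈ G`
acts as `𝔊(ρ(g, id))`. -/
def evalGSet (𝔊 : Cᵒᵖ ⥤ Type) : GSet G where
  obj _ := 𝔊.obj (Opposite.op (ρ.obj ⟨x₀⟩))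
  map f := 𝔊.map (ρ.map (gmor hbot f.unop)).op
  map_id _ := by
    show 𝔊.map (ρ.map (gmor hbot (1 : G))).op = _
    rw [gmor_one, ρ.map_id]
    exact 𝔊.map_id _
  map_comp {X Y Z} f g := by
    show 𝔊.map (ρ.map (gmor hbot (f.unop * g.unop))).op = _
    rw [← gmor_comp, ρ.map_comp, op_comp, 𝔊.map_comp]

end

/-- `ρ : P⋊G ⥤ C` is a category extension: it is bijective on objects,
surjective on morphism sets, the kernel groups `K(y)` act freely by
postcomposition on hom sets, and `ρ` exactly identifies the `K(y)`-orbits of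
morphisms, i.e. `K(y)\Hom(x, y) ≅ Hom_C(ρx, ρy)`. -/
structure IsCatExtension (ρ : Transporter G P ⥤ C) : Prop where
  bij_obj : Function.Bijective ρ.obj
  surj_map : ∀ {x y : Transporter G P} (f : ρ.obj x ⟶ ρ.obj y), ∃ u : x ⟶ y, ρ.map u = f
  free : ∀ {y : Transporter G P} (α : y ⟶ y), ρ.map α = 𝟙 (ρ.obj y) →
    ∀ {x : Transporter G P} (u : x ⟶ y), u ≫ α = u → α = 𝟙 y
  fiber : ∀ {x y : Transporter G P} (u u' : x ⟶ y),
    ρ.map u = ρ.map u' ↔ ∃ α : y ⟶ y, ρ.map α = 𝟙 (ρ.obj y) ∧ u ≫ α = u'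

/-! ## The transporter category `T(G)` on subgroups -/

/-- The transporter category `T(G)`: objects are the subgroups of `G`,
morphisms `H ⟶ K` are elements `g ∈ G` with `gHg⁻¹ ≤ K`. -/
@[ext] structure TransporterCat (G : Type) [Group G] where sub : Subgroup G

instance TransporterCat.category (G : Type) [Group G] : Category (TransporterCat G) where
  Hom H K := { g : G // ∀ h ∈ H.sub, g * h * g⁻¹ ∈ K.sub }
  id H := ⟨1, fun h hh => by simpa using hh⟩
  comp {H K L} f g := ⟨g.1 * f.1, fun h hh => by
    have hmem := g.2 _ (f.2 h hh)
    have heq : g.1 * (f.1 * h * f.1⁻¹) * g.1⁻¹ = (g.1 * f.1) * h * (g.1 * f.1)⁻¹ := by group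
    rwa [heq] at hmem⟩
  id_comp f := Subtype.ext (mul_one _)
  comp_id f := Subtype.ext (one_mul _)
  assoc f g h := Subtype.ext (mul_assoc h.1 g.1 f.1).symm

/-- The conjugate subgroup `gHg⁻¹`. -/
def conjSubgroup (g : G) (H : Subgroup G) : Subgroup G :=
  H.map (MulAut.conj g).toMonoidHom

lemma conjSubgroup_inv_mem {g : G} {H : Subgroup G} {w : G}
    (hw : w ∈ conjSubgroup g H) : g⁻¹ * w * g⁻¹⁻¹ ∈ H := by
  obtain ⟨h, hh, rfl⟩ := hw
  have : g⁻¹ * ((MulAut.conj g).toMonoidHom h) * g⁻¹⁻¹ = h := by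
    simp [MulAut.conj_apply]; group
  rwa [this]

/-- The `G`-map `H\G → K\G`, `Hk ↦ Kgk`, attached to `g ∈ G` with `gHg⁻¹ ≤ K`. -/
def transToOrbit {H K : Subgroup G} (g : { g : G // ∀ h ∈ H, g * h * g⁻¹ ∈ K }) :
    cosetGSet H ⟶ cosetGSet K where
  app _ := TypeCat.ofHom (Quotient.map' (fun k => g.1 * k)
    (fun a b hab => by
      rw [QuotientGroup.rightRel_apply] at hab ⊢
      have := g.2 _ hab
      have heq : g.1 * (b * a⁻¹) * g.1⁻¹ = (g.1 * b) * (g.1 * a)⁻¹ := by group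
      rwa [heq] at this))
  naturality X Y f := by
    ext q
    induction q using Quotient.inductionOn' with
    | h k => exact congrArg (Quotient.mk _) (mul_assoc g.1 k f.unop).symm

/-- The setoid on `{g : G // gHg⁻¹ ≤ K}` whose classes are right cosets `Kg`. -/
def transSetoid (H K : Subgroup G) : Setoid { g : G // ∀ h ∈ H, g * h * g⁻¹ ∈ K } where
  r a b := a.1 * b.1⁻¹ ∈ K
  iseqv := by
    constructor
    · intro a; simpa using K.one_mem
    · intro a b h
      simpa using K.inv_mem h
    · intro a b c h1 h2
      have := K.mul_mem h1 h2
      simpa [mul_assoc] using this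

/-! ## The coset space `H\G` as a discrete `G`-poset -/

/-- The coset space `H\G` as a discretely ordered `G`-poset, with `g` acting
by `Hk ↦ Hkg⁻¹`. -/
def CosetPoset (G : Type) [Group G] (H : Subgroup G) :=
  Quotient (QuotientGroup.rightRel H)

instance (H : Subgroup G) : PartialOrder (CosetPoset G H) where
  le x y := x = y
  le_refl _ := rfl
  le_trans _ _ _ h h' := Eq.trans h h'
  le_antisymm _ _ h _ := h

instance (H : Subgroup G) : MulAction G (CosetPoset G H) where
  smul g := Quotient.map' (fun k => k * g⁻¹)
    (fun a b hab => by
      rw [QuotientGroup.rightRel_apply] at hab ⊢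
      simpa [mul_assoc] using hab)
  one_smul q := by
    induction q using Quotient.inductionOn' with
    | h k => exact congrArg (Quotient.mk _) (by simp)
  mul_smul a b q := by
    induction q using Quotient.inductionOn' with
    | h k => exact congrArg (Quotient.mk _) (by simp [mul_assoc])

instance (H : Subgroup G) : CovariantClass G (CosetPoset G H) (· • ·) (· ≤ ·) where
  elim g x y h := le_of_eq (congrArg (g • ·) (le_antisymm h (Eq.symm h : y ≤ x)))

/-! ## Underlying `G`-set of a right `RG`-module -/

/-- The underlying right `G`-set of a right `RG`-module. -/
noncomputable def UGSet (R : Type) [CommRing R]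
    (M : ModuleCat (MonoidAlgebra R G)ᵐᵒᵖ) : GSet G where
  obj _ := M
  map f := TypeCat.ofHom (fun m => (MulOpposite.op (MonoidAlgebra.single f.unop (1 : R))) • m)
  map_id _ := by
    ext m
    show (MulOpposite.op (MonoidAlgebra.single (1 : G) (1 : R))) • m = m
    rw [← MonoidAlgebra.one_def, MulOpposite.op_one, one_smul]
  map_comp {X Y Z} f g := by
    ext m
    show (MulOpposite.op (MonoidAlgebra.single (f.unop * g.unop) (1 : R))) • m =
      (MulOpposite.op (MonoidAlgebra.single g.unop (1 : R))) •
        ((MulOpposite.op (MonoidAlgebra.single f.unop (1 : R))) • m)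
    rw [smul_smul, ← MulOpposite.op_mul, MonoidAlgebra.single_mul_single, one_mul]

/-!
The free orbit `1\G` has automorphism group `G`, acting by left multiplication, and every orbit
`H\G` receives a map from it; so `G`, as a one-object groupoid, is a dense subsite of `O(G)`.
In a groupoid every nonempty sieve is maximal, hence the atomic topology restricts to the trivial
one, and the comparison lemma identifies sheaves on `O(G)` with presheaves on `G`, that is, with
right `G`-representations, that is, with right `RG`-modules.
-/

universe u

namespace CategoryTheory

theorem Sieve.eq_top_of_groupoid {C : Type*} [Groupoid C] {X Y : C} (S : Sieve X)
    {f : Y ⟶ X} (hf : S f) : S = ⊤ :=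
  Sieve.id_mem_iff_eq_top.mp (by simpa using S.downward_closed hf (Groupoid.inv f))

theorem Functor.isDenseSubsite_bot_of_isAtomicTopology {C D : Type*} [Groupoid C] [Category D]
    (F : C ⥤ D) [F.Full] [F.Faithful] {K : GrothendieckTopology D} (hK : IsAtomicTopology K)
    (hF : ∀ d : D, ∃ c : C, Nonempty (F.obj c ⟶ d)) :
    F.IsDenseSubsite ⊥ K := by
  have : F.IsCoverDense K := ⟨fun d => by
    obtain ⟨c, ⟨f⟩⟩ := hF d
    exact (hK d _).mpr ⟨_, f, Presieve.in_coverByImage F f⟩⟩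
  refine ⟨inferInstance, inferInstance, inferInstance, fun {X S} => ?_⟩
  rw [← GrothendieckTopology.trivial_eq_bot, GrothendieckTopology.trivial_covering, hK]
  constructor
  · rintro ⟨_, _, _, g, _, hg, -⟩
    exact S.eq_top_of_groupoid hg
  · rintro rfl
    exact ⟨_, _, Sieve.image_mem_functorPushforward F ⊤ (f := 𝟙 X) trivial⟩

def SingleObj.mopEquivOp (M : Type u) [Monoid M] : SingleObj Mᵐᵒᵖ ≌ (SingleObj M)ᵒᵖ :=
  CategoryTheory.Equivalence.mk
    { obj _ := Opposite.op (SingleObj.star M)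
      map a := Quiver.Hom.op (show SingleObj.star M ⟶ SingleObj.star M from MulOpposite.unop a)
      map_id _ := rfl
      map_comp _ _ := rfl }
    { obj _ := SingleObj.star Mᵐᵒᵖ
      map a := show Mᵐᵒᵖ from MulOpposite.op (show M from a.unop)
      map_id _ := rfl
      map_comp _ _ := rfl }
    (Iso.refl _) (Iso.refl _)

/-- A right `R[M]`-module is a left module over `R[M]ᵐᵒᵖ ≃ Rᵐᵒᵖ[Mᵐᵒᵖ]`, i.e. an
`Rᵐᵒᵖ`-linear representation of `Mᵐᵒᵖ`. -/
noncomputable def singleObjOpFunctorEquivModuleCat (M R : Type u) [Monoid M] [CommRing R] :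
    ((SingleObj M)ᵒᵖ ⥤ ModuleCat.{u} R) ≌ ModuleCat.{u} (MonoidAlgebra R M)ᵐᵒᵖ :=
  (SingleObj.mopEquivOp M).symm.congrLeft.trans <|
    (ModuleCat.restrictScalarsEquivalenceOfRingEquiv
      (RingEquiv.toOpposite R).symm).congrRight.trans <|
    (Action.functorCategoryEquivalence (ModuleCat.{u} Rᵐᵒᵖ) Mᵐᵒᵖ).symm.trans <|
    (Rep.repIsoAction _ _).symm.trans <|
    Rep.equivalenceModuleMonoidAlgebra.trans <|
    ModuleCat.restrictScalarsEquivalenceOfRingEquiv MonoidAlgebra.opRingEquiv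

end CategoryTheory

def orbitProj (H : Subgroup G) : cosetGSet (⊥ : Subgroup G) ⟶ cosetGSet H where
  app _ := TypeCat.ofHom (Quotient.map' id fun a b hab => by
    rw [QuotientGroup.rightRel_apply, Subgroup.mem_bot] at hab
    exact QuotientGroup.rightRel_apply.mpr (hab ▸ H.one_mem))
  naturality _ _ _ := by
    ext q
    induction q using Quotient.inductionOn'
    rfl

theorem cosetGSet_hom_ext {H : Subgroup G} {M : GSet G} {φ ψ : cosetGSet H ⟶ M}
    (h : φ.app (Opposite.op (SingleObj.star G)) (Quotient.mk'' 1) =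
      ψ.app (Opposite.op (SingleObj.star G)) (Quotient.mk'' 1)) : φ = ψ := by
  apply NatTrans.ext
  funext X
  ext q
  induction q using Quotient.inductionOn' with
  | h k =>
    have hk := fun (η : cosetGSet H ⟶ M) => ConcreteCategory.congr_hom
      (η.naturality (Quiver.Hom.op (show SingleObj.star G ⟶ SingleObj.star G from k)))
      (Quotient.mk'' 1)
    rw [← one_mul k]
    exact (hk φ).trans ((congrArg (ConcreteCategory.hom (M.map _)) h).trans (hk ψ).symm)

instance : (orbitBotIota G).Faithful where
  map_injective {_ _} a b hab := by
    have h := Quotient.exact' (congrArg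
      (fun φ => φ.hom.app (Opposite.op (SingleObj.star G)) (Quotient.mk'' (1 : G))) hab)
    simp only [QuotientGroup.rightRel_apply, Subgroup.mem_bot, mul_inv_eq_one] at h
    simpa using h.symm

instance : (orbitBotIota G).Full where
  map_surjective {_ _} φ := by
    obtain ⟨a, ha⟩ := Quotient.exists_rep
      (φ.hom.app (Opposite.op (SingleObj.star G)) (Quotient.mk'' (1 : G)))
    refine ⟨a, InducedCategory.hom_ext (cosetGSet_hom_ext ?_)⟩
    exact (congrArg Quotient.mk'' (mul_one a)).trans ha

theorem orbitBotIota_isDenseSubsite {J : GrothendieckTopology (OrbitCat G)}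
    (hJ : IsAtomicTopology J) : (orbitBotIota G).IsDenseSubsite ⊥ J :=
  (orbitBotIota G).isDenseSubsite_bot_of_isAtomicTopology hJ
    fun H => ⟨SingleObj.star G, ⟨InducedCategory.homMk (orbitProj H)⟩⟩

noncomputable def sheafOrbitCatEquivFunctor {J : GrothendieckTopology (OrbitCat G)}
    (hJ : IsAtomicTopology J) (A : Type*) [Category A] [Limits.HasLimitsOfSize.{0, 0} A] :
    Sheaf J A ≌ ((SingleObj G)ᵒᵖ ⥤ A) :=
  have := orbitBotIota_isDenseSubsite hJ
  (Functor.IsDenseSubsite.sheafEquiv (G := orbitBotIota G) (K := J) ⊥ A).symm.trans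
    (sheafBotEquivalence A)

theorem sheaves_of_modules_on_orbit_category_general (G : Type) [Group G]
    (R : Type) [CommRing R]
    (J : GrothendieckTopology (OrbitCat G)) (hJ : IsAtomicTopology J) :
    Nonempty (Sheaf J (ModuleCat.{0} R) ≌ ModuleCat.{0} (MonoidAlgebra R G)ᵐᵒᵖ) :=
  ⟨(sheafOrbitCatEquivFunctor hJ _).trans (singleObjOpFunctorEquivModuleCat G R)⟩

/-- For a finite group `G` and a commutative ring `R`, sheaves of `R`-modules on
the orbit category `O(G)` with the atomic topology form a category equivalent to
the category of right `RG`-modules. -/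
theorem sheaves_of_modules_on_orbit_category (G : Type) [Group G] [Finite G]
    (R : Type) [CommRing R]
    (J : GrothendieckTopology (OrbitCat G)) (hJ : IsAtomicTopology J) :
    Nonempty (Sheaf J (ModuleCat.{0} R) ≌ ModuleCat.{0} (MonoidAlgebra R G)ᵐᵒᵖ) :=
  sheaves_of_modules_on_orbit_category_general G R J hJ
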